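/- arXiv:0812.2286 — 8 statements merged into one kernel-verified Lean document; each statement's English description precedes it below -/
import Mathlib

section
/- Let A, B, C be pairwise coprime polynomials in ℂ[x], not all constant, satisfying A + B = C. If k denotes the number of distinct roots of the product A·B·C, then max(deg A, deg B, deg C) ≤ k − 1. -/
/-!
Apply the Mason–Stothers theorem to `A + B + (-C) = 0`: in characteristic zero its alternative
case (all derivatives vanish) forces all three polynomials to be constant, so each degree is less
than the degree of `radical (A * B * C)`. Over an algebraically closed field the radical is
squarefree, hence separable, hence a product of distinct linear factors `X - a` whose roots `a`
are roots of `A * B * C`.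
-/

open Polynomial UniqueFactorizationMonoid

namespace Polynomial

theorem natDegree_eq_zero_of_isCoprime_zero_left {R : Type*} [CommRing R] [IsDomain R]
    {p : R[X]} (h : IsCoprime 0 p) : p.natDegree = 0 :=
  natDegree_eq_zero_of_isUnit (isCoprime_zero_left.mp h)

theorem natDegree_radical_le_card_roots_toFinset {k : Type*} [Field k] [IsAlgClosed k]
    [DecidableEq k] (p : k[X]) : (radical p).natDegree ≤ p.roots.toFinset.card := by
  rcases eq_or_ne p 0 with rfl | hp
  · simp
  have hsep : (radical p).Separable :=
    PerfectField.separable_iff_squarefree.mpr squarefree_radical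
  calc (radical p).natDegree = (radical p).roots.toFinset.card := by
        rw [(IsAlgClosed.splits _).natDegree_eq_card_roots,
          Multiset.toFinset_card_of_nodup (nodup_roots hsep)]
    _ ≤ p.roots.toFinset.card :=
        Finset.card_le_card fun x hx => by
          rw [Multiset.mem_toFinset] at hx ⊢
          exact Multiset.mem_of_le (roots.le_of_dvd hp radical_dvd_self) hx

theorem max_natDegree_lt_natDegree_radical {k : Type*} [Field k] [CharZero k] [DecidableEq k]
    {A B C : k[X]}
    (hA : A ≠ 0) (hB : B ≠ 0) (hC : C ≠ 0) (hAB : IsCoprime A B)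
    (hconst : ¬ (A.natDegree = 0 ∧ B.natDegree = 0 ∧ C.natDegree = 0)) (hsum : A + B = C) :
    max (max A.natDegree B.natDegree) C.natDegree < (radical (A * B * C)).natDegree := by
  have hsum' : A + B + -C = 0 := by rw [hsum, add_neg_cancel]
  have hrad : radical (A * B * -C) = radical (A * B * C) := by
    rw [mul_neg, UniqueFactorizationDomain.radical_neg]
  rcases Polynomial.abc hA hB (neg_ne_zero.mpr hC) hAB hsum' with
    ⟨hA', hB', hC'⟩ | ⟨dA, dB, dC⟩
  · rw [hrad] at hA' hB' hC'
    rw [natDegree_neg] at hC'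
    omega
  · refine absurd ⟨derivative_eq_zero.mp dA, derivative_eq_zero.mp dB, ?_⟩ hconst
    simpa only [natDegree_neg] using derivative_eq_zero.mp dC

end Polynomial

/-- Mason's ABC theorem for polynomials over ℂ: if `A`, `B`, `C` are pairwise
coprime, not all constant, and `A + B = C`, then the max of their degrees is
at most (number of distinct roots of `A*B*C`) − 1. -/
theorem mason_abc (A B C : ℂ[X])
    (hAB : IsCoprime A B) (hAC : IsCoprime A C) (hBC : IsCoprime B C)
    (hconst : ¬ (A.natDegree = 0 ∧ B.natDegree = 0 ∧ C.natDegree = 0))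
    (hsum : A + B = C) :
    max (max A.natDegree B.natDegree) C.natDegree
      ≤ (A * B * C).roots.toFinset.card - 1 := by
  have hA : A ≠ 0 := by
    rintro rfl
    exact hconst ⟨natDegree_zero, natDegree_eq_zero_of_isCoprime_zero_left hAB,
      natDegree_eq_zero_of_isCoprime_zero_left hAC⟩
  have hB : B ≠ 0 := by
    rintro rfl
    exact hconst ⟨natDegree_eq_zero_of_isCoprime_zero_left hAB.symm, natDegree_zero,
      natDegree_eq_zero_of_isCoprime_zero_left hBC⟩
  have hC : C ≠ 0 := by
    rintro rfl
    exact hconst ⟨natDegree_eq_zero_of_isCoprime_zero_left hAC.symm,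
      natDegree_eq_zero_of_isCoprime_zero_left hBC.symm, natDegree_zero⟩
  have hlt := max_natDegree_lt_natDegree_radical hA hB hC hAB hconst hsum
  have hle := natDegree_radical_le_card_roots_toFinset (A * B * C)
  omega
end

section
/- For every n ≥ 3, if f, g, h ∈ ℂ[x] satisfy f^n + g^n = h^n and at most one of f, g, h is constant, and f, g, h are pairwise coprime, then no such f, g, h exist (the Fermat equation for polynomials has only trivial solutions). -/
open Polynomial

theorem IsCoprime.right_ne_zero_of_not_natDegree_eq_zero {R : Type*} [CommRing R]
    [NoZeroDivisors R] {p q : R[X]} (hpq : IsCoprime p q)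
    (hdeg : ¬ (p.natDegree = 0 ∧ q.natDegree = 0)) : q ≠ 0 := by
  rintro rfl
  exact hdeg ⟨natDegree_eq_zero_of_isUnit (isCoprime_zero_right.mp hpq), natDegree_zero⟩

theorem polynomial_fermat_general (n : ℕ) (hn : 3 ≤ n) (f g h : ℂ[X])
    (hfg : IsCoprime f g) (hfh : IsCoprime f h)
    (hconst1 : ¬ (f.natDegree = 0 ∧ g.natDegree = 0))
    (hconst2 : ¬ (f.natDegree = 0 ∧ h.natDegree = 0))
    (heq : f ^ n + g ^ n = h ^ n) : False := by
  have hf : f ≠ 0 := hfg.symm.right_ne_zero_of_not_natDegree_eq_zero (by rwa [and_comm])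
  have hg : g ≠ 0 := hfg.right_ne_zero_of_not_natDegree_eq_zero hconst1
  have hh : h ≠ 0 := hfh.right_ne_zero_of_not_natDegree_eq_zero hconst2
  obtain ⟨hf_const, hg_const, -⟩ :=
    Polynomial.flt hn (Nat.cast_ne_zero.mpr (by omega)) hf hg hh hfg heq
  exact hconst1 ⟨hf_const, hg_const⟩

/-- The Fermat equation `f^n + g^n = h^n` for polynomials over ℂ with `n ≥ 3`
has no solutions with `f, g, h` pairwise coprime and at most one of them
constant. -/
theorem polynomial_fermat (n : ℕ) (hn : 3 ≤ n) (f g h : ℂ[X])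
    (hfg : IsCoprime f g) (hfh : IsCoprime f h) (hgh : IsCoprime g h)
    (hconst1 : ¬ (f.natDegree = 0 ∧ g.natDegree = 0))
    (hconst2 : ¬ (f.natDegree = 0 ∧ h.natDegree = 0))
    (hconst3 : ¬ (g.natDegree = 0 ∧ h.natDegree = 0))
    (heq : f ^ n + g ^ n = h ^ n) : False :=
  polynomial_fermat_general n hn f g h hfg hfh hconst1 hconst2 heq
end

section
/- For every k ≥ 2 there exists M₀ such that for all m ≥ M₀, the equation f₁(x)^m + f₂(x)^m + ⋯ + f_k(x)^m = 0 has no solution in polynomials f₁, …, f_k ∈ ℂ[x] with all f_i nonzero and no f_i a scalar multiple of another f_j (i ≠ j). -/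
/-!
Among the vanishing combinations of the `f i ^ m`, take one of minimal length `n + 1`,
`∑ c t • f (e t) ^ m = 0`, and divide out the gcd: `f (e t) = G * u t` where the `u t` have no
common root and every proper subfamily of the `u t ^ m` is linearly independent. Then the
Wronskian `W` of all but one of the terms `c t • u t ^ m` is nonzero, and up to sign it does not
depend on which term is left out. At a root `r`, leaving out a term with `u t r ≠ 0` shows that
`W` vanishes to order at least `∑ₜ ord_r (u t ^ m) - n.choose 2`. Summing over the distinct roots
and comparing with `deg W` gives `m * deg (u t) ≤ n.choose 2 * ∑ₛ deg (u s)`, so either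
`m ≤ (n + 1) * n.choose 2 ≤ k ^ 3` or all `u t` are constant, and then two of the `f i` are
proportional.
-/

open Polynomial Matrix

theorem exists_minimal_vanishing_combination {K V ι : Type*} [Ring K] [AddCommGroup V]
    [Module K V] {g : ι → V} (hg : ¬ LinearIndependent K g) :
    ∃ (n : ℕ) (e : Fin (n + 1) → ι) (c : Fin (n + 1) → K), Function.Injective e ∧
      (∀ t, c t ≠ 0) ∧ ∑ t, c t • g (e t) = 0 ∧
      ∀ t : Fin (n + 1), LinearIndependent K (g ∘ e ∘ t.succAbove) := by
  classical
  have hex : ∃ N, ∃ e : Fin N → ι, Function.Injective e ∧ ¬ LinearIndependent K (g ∘ e) := by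
    obtain ⟨s, hs⟩ := not_forall.1 (mt linearIndependent_iff_finset_linearIndependent.2 hg)
    refine ⟨s.card, Subtype.val ∘ s.equivFin.symm,
      Subtype.val_injective.comp s.equivFin.symm.injective, ?_⟩
    rwa [← Function.comp_assoc, linearIndependent_equiv]
  have hspec := Nat.find_spec hex
  obtain ⟨n, hn⟩ : ∃ n, Nat.find hex = n + 1 := by
    refine Nat.exists_eq_add_one.2 (Nat.pos_of_ne_zero fun h0 => ?_)
    rw [h0] at hspec
    obtain ⟨e, -, hdep⟩ := hspec
    exact hdep (linearIndependent_empty_type)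
  rw [hn] at hspec
  obtain ⟨e, he, hdep⟩ := hspec
  have hli (t : Fin (n + 1)) : LinearIndependent K (g ∘ e ∘ t.succAbove) := by
    by_contra h
    have := Nat.find_min' hex ⟨e ∘ t.succAbove, he.comp Fin.succAbove_right_injective, h⟩
    omega
  obtain ⟨c, hc, t₀, ht₀⟩ := Fintype.not_linearIndependent_iff.1 hdep
  refine ⟨n, e, c, he, fun t ht => ht₀ ?_, hc, hli⟩
  have hc' : ∑ s, c (t.succAbove s) • (g ∘ e ∘ t.succAbove) s = 0 := by
    rw [← hc, Fin.sum_univ_succAbove _ t, ht, zero_smul, zero_add]; rfl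
  have hzero := Fintype.linearIndependent_iff.1 (hli t) _ hc'
  rcases eq_or_ne t₀ t with rfl | hne
  · exact ht
  · obtain ⟨s, rfl⟩ := Fin.exists_succAbove_eq hne
    exact hzero s

namespace Polynomial

theorem exists_eq_C_mul_of_wronskian_eq_zero {K : Type*} [Field K] [CharZero K] {p q : K[X]}
    (hq : q ≠ 0) (h : wronskian p q = 0) : ∃ a : K, p = C a * q := by
  classical
  have hd : gcd p q ≠ 0 := gcd_ne_zero_of_right hq
  have hab := isCoprime_div_gcd_div_gcd (p := p) hq
  obtain ⟨a, ha⟩ := gcd_dvd_left p q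
  obtain ⟨b, hb⟩ := gcd_dvd_right p q
  generalize gcd p q = d at hd hab ha hb
  subst ha hb
  rw [mul_div_cancel_left₀ _ hd, mul_div_cancel_left₀ _ hd] at hab
  have hw : wronskian a b = 0 := by
    have : d ^ 2 * wronskian a b = 0 := by
      rw [← h]; simp only [wronskian, derivative_mul]; ring
    exact (mul_eq_zero.1 this).resolve_left (pow_ne_zero 2 hd)
  obtain ⟨ha', hb'⟩ := hab.wronskian_eq_zero_iff.1 hw
  obtain ⟨α, rfl⟩ : ∃ α, a = C α := ⟨_, eq_C_of_derivative_eq_zero ha'⟩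
  obtain ⟨β, rfl⟩ : ∃ β, b = C β := ⟨_, eq_C_of_derivative_eq_zero hb'⟩
  have hβ : β ≠ 0 := by rintro rfl; simp at hq
  refine ⟨α / β, ?_⟩
  rw [div_eq_mul_inv, C_mul, mul_mul_mul_comm, ← C_mul, inv_mul_cancel₀ hβ, C_1, mul_one, mul_comm]

section WronskianMatrix

variable {R : Type*} [CommRing R]

noncomputable def wronskianMatrix {n : ℕ} (v : Fin n → R[X]) : Matrix (Fin n) (Fin n) R[X] :=
  .of fun i j => derivative^[i] (v j)

theorem natDegree_det_wronskianMatrix_le {n : ℕ} (v : Fin n → R[X]) :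
    (wronskianMatrix v).det.natDegree ≤ ∑ j, (v j).natDegree := by
  rw [Matrix.det_apply']
  refine natDegree_sum_le_of_forall_le _ _ fun σ _ => natDegree_mul_le.trans ?_
  rw [natDegree_intCast, zero_add]
  refine (natDegree_prod_le _ _).trans (Finset.sum_le_sum fun j _ => ?_)
  exact (natDegree_iterate_derivative _ _).trans tsub_le_self

theorem pow_sub_dvd_det_wronskianMatrix {n : ℕ} (v : Fin n → R[X]) (r : R) :
    (X - C r) ^ (∑ j, rootMultiplicity r (v j) - n.choose 2) ∣ (wronskianMatrix v).det := by
  rw [Matrix.det_apply']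
  refine Finset.dvd_sum fun σ _ => dvd_mul_of_dvd_right ?_ _
  calc (X - C r) ^ (∑ j, rootMultiplicity r (v j) - n.choose 2)
      ∣ (X - C r) ^ ∑ j, (rootMultiplicity r (v j) - σ j) := pow_dvd_pow _ ?_
    _ = ∏ j, (X - C r) ^ (rootMultiplicity r (v j) - σ j) := (Finset.prod_pow_eq_pow_sum ..).symm
    _ ∣ ∏ j, wronskianMatrix v (σ j) j := Finset.prod_dvd_prod_of_dvd _ _ fun j _ =>
          pow_sub_dvd_iterate_derivative_of_pow_dvd _ (pow_rootMultiplicity_dvd _ _)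
  have hσ : ∑ j, (σ j : ℕ) = n.choose 2 := by
    rw [Equiv.sum_comp σ (fun i => (i : ℕ)), Fin.sum_univ_eq_sum_range (fun i => i),
      Finset.sum_range_id, Nat.choose_two_right]
  rw [← hσ, tsub_le_iff_right, ← Finset.sum_add_distrib]
  exact Finset.sum_le_sum fun j _ => le_tsub_add

theorem wronskianMatrix_succAbove_mulVec_eq_zero {n : ℕ} {v c : Fin (n + 1) → R[X]}
    (hc : wronskianMatrix v *ᵥ c = 0) (j₀ : Fin (n + 1)) :
    wronskianMatrix (v ∘ j₀.succAbove) *ᵥ (fun j => wronskian (c (j₀.succAbove j)) (c j₀)) =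
      0 := by
  funext i
  have h₀ : ∑ j, derivative^[i] (v j) * c j = 0 := congrFun hc i.castSucc
  have h₁ : ∑ j, derivative^[i + 1] (v j) * c j = 0 := congrFun hc i.succ
  have h₂ : ∑ j, derivative^[i] (v j) * derivative (c j) = 0 := by
    have := congrArg derivative h₀
    simpa only [derivative_sum, derivative_mul, Finset.sum_add_distrib,
      ← Function.iterate_succ_apply' derivative, h₁, zero_add, derivative_zero] using this
  calc (wronskianMatrix (v ∘ j₀.succAbove) *ᵥ _) i
      = ∑ j, derivative^[i] (v j) * wronskian (c j) (c j₀) := by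
        rw [Fin.sum_univ_succAbove _ j₀, wronskian_self_eq_zero, mul_zero, zero_add]; rfl
    _ = derivative (c j₀) * ∑ j, derivative^[i] (v j) * c j
          - c j₀ * ∑ j, derivative^[i] (v j) * derivative (c j) := by
        simp only [wronskian, Finset.mul_sum, ← Finset.sum_sub_distrib]
        exact Finset.sum_congr rfl fun j _ => by ring
    _ = 0 := by rw [h₀, h₂, mul_zero, mul_zero, sub_zero]

theorem natCast_mul_det_wronskianMatrix_succAbove_eq {n : ℕ} {v : Fin (n + 1) → R[X]}
    (hv : ∑ t, v t = 0) (t t' : Fin (n + 1)) :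
    (n + 1 : R[X]) * ((-1) ^ (t : ℕ) * (wronskianMatrix (v ∘ t.succAbove)).det) =
      (n + 1 : R[X]) * ((-1) ^ (t' : ℕ) * (wronskianMatrix (v ∘ t'.succAbove)).det) := by
  -- Both sides are `det A`: as `A *ᵥ 1 = Pi.single 0 (n + 1)`, the identity
  -- `adjugate A * A = det A • 1` shows `adjugate A t 0 * (n + 1) = det A` for every `t`.
  let A : Matrix (Fin (n + 1)) (Fin (n + 1)) R[X] :=
    .of (Fin.cons 1 fun (i : Fin n) t => derivative^[i] (v t))
  have hA : A *ᵥ 1 = Pi.single 0 ((n : R[X]) + 1) := by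
    funext i
    refine Fin.cases ?_ (fun i => ?_) i
    · simp [A, mulVec, dotProduct]
    · simp [A, mulVec, dotProduct, ← iterate_derivative_sum, hv]
  have hsub (t : Fin (n + 1)) :
      A.submatrix Fin.succ t.succAbove = wronskianMatrix (v ∘ t.succAbove) := by
    ext i j; simp [A, wronskianMatrix]
  have key (t : Fin (n + 1)) :
      (n + 1 : R[X]) * ((-1) ^ (t : ℕ) * (wronskianMatrix (v ∘ t.succAbove)).det) = A.det := by
    have := congrFun (congrArg (adjugate A *ᵥ ·) hA) t
    simp only [mulVec_mulVec, adjugate_mul, smul_mulVec, one_mulVec, mulVec_single] at this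
    simp only [Pi.smul_apply, Pi.one_apply, smul_eq_mul, mul_one, col_apply,
      adjugate_fin_succ_eq_det_submatrix, Fin.val_zero, zero_add, Fin.succAbove_zero, hsub,
      MulOpposite.smul_eq_mul_unop, MulOpposite.unop_op] at this
    rw [this]; ring
  rw [key, key]

end WronskianMatrix

theorem det_wronskianMatrix_ne_zero {K : Type*} [Field K] [CharZero K] :
    ∀ {n : ℕ} {v : Fin n → K[X]}, LinearIndependent K v → (wronskianMatrix v).det ≠ 0
  | 0, _, _ => by simp
  | n + 1, v, hv => by
    -- By induction, a kernel vector `c` of the Wronskian matrix is proportional over `K` to one of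
    -- its nonzero entries `c j₀`, so it yields a linear relation among the `v j`.
    intro hdet
    obtain ⟨c, hc0, hc⟩ := Matrix.exists_mulVec_eq_zero_iff.2 hdet
    obtain ⟨j₀, hj₀⟩ : ∃ j, c j ≠ 0 := Function.ne_iff.1 hc0
    have hsub :=
      det_wronskianMatrix_ne_zero (hv.comp _ (Fin.succAbove_right_injective (p := j₀)))
    have hw : ∀ j, wronskian (c j) (c j₀) = 0 := by
      have :=
        Matrix.eq_zero_of_mulVec_eq_zero hsub (wronskianMatrix_succAbove_mulVec_eq_zero hc j₀)
      intro j
      rcases eq_or_ne j j₀ with rfl | hj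
      · exact wronskian_self_eq_zero _
      · obtain ⟨j', rfl⟩ := Fin.exists_succAbove_eq hj
        exact congrFun this j'
    choose α hα using fun j => exists_eq_C_mul_of_wronskian_eq_zero hj₀ (hw j)
    have hrel : ∑ j, α j • v j = 0 := by
      have h₀ : ∑ j, v j * c j = 0 := congrFun hc 0
      have : (∑ j, α j • v j) * c j₀ = 0 := by
        rw [← h₀, Finset.sum_mul]
        exact Finset.sum_congr rfl fun j _ => by rw [hα j, smul_eq_C_mul]; ring
      exact (mul_eq_zero.1 this).resolve_right hj₀
    have hα0 := Fintype.linearIndependent_iff.1 hv α hrel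
    exact hc0 (_root_.funext fun j => by rw [hα j, hα0, C_0, zero_mul]; rfl)

theorem associated_det_wronskianMatrix_succAbove {K : Type*} [Field K] [CharZero K] {n : ℕ}
    {v : Fin (n + 1) → K[X]} (hv : ∑ t, v t = 0) (t t' : Fin (n + 1)) :
    Associated (wronskianMatrix (v ∘ t.succAbove)).det
      (wronskianMatrix (v ∘ t'.succAbove)).det := by
  have h := mul_left_cancel₀ (Nat.cast_add_one_ne_zero n)
    (natCast_mul_det_wronskianMatrix_succAbove_eq hv t t')
  have hu (s : Fin (n + 1)) : IsUnit ((-1 : K[X]) ^ (s : ℕ)) := isUnit_neg_one.pow _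
  rw [← associated_isUnit_mul_left_iff (hu t), ← associated_isUnit_mul_right_iff (hu t'), h]
  exact .refl _


theorem sum_rootMultiplicity_le_natDegree {R : Type*} [CommRing R] [IsDomain R] (p : R[X])
    (s : Finset R) : ∑ r ∈ s, rootMultiplicity r p ≤ p.natDegree := by
  classical
  calc ∑ r ∈ s, rootMultiplicity r p = ∑ r ∈ s, p.roots.count r := by simp only [count_roots]
    _ ≤ ∑ r ∈ s ∪ p.roots.toFinset, p.roots.count r :=
        Finset.sum_le_sum_of_subset Finset.subset_union_left
    _ = Multiset.card p.roots := Multiset.sum_count_eq_card fun r hr =>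
        Finset.mem_union_right _ (Multiset.mem_toFinset.2 hr)
    _ ≤ p.natDegree := card_roots' p

theorem sum_rootMultiplicity_eq_natDegree {K : Type*} [Field K] [IsAlgClosed K] {p : K[X]}
    {s : Finset K} (hs : ∀ r ∈ p.roots, r ∈ s) : ∑ r ∈ s, rootMultiplicity r p = p.natDegree := by
  classical
  simp only [← count_roots]
  rw [Multiset.sum_count_eq_card hs, IsAlgClosed.card_roots_eq_natDegree]

/-- A Brownawell–Masser inequality. -/
theorem natDegree_le_choose_two_mul_card_roots_of_sum_eq_zero {K : Type*} [Field K]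
    [IsAlgClosed K] [CharZero K] [DecidableEq K] {n : ℕ} {v : Fin (n + 1) → K[X]}
    (hsum : ∑ t, v t = 0) (hroot : ∀ r, ∃ t, ¬ (v t).IsRoot r) {t₀ : Fin (n + 1)}
    (hli : LinearIndependent K (v ∘ t₀.succAbove)) (t : Fin (n + 1)) :
    (v t).natDegree ≤ n.choose 2 * (Finset.univ.biUnion fun s => (v s).roots.toFinset).card := by
  set R := Finset.univ.biUnion fun s => (v s).roots.toFinset
  set W := (wronskianMatrix (v ∘ t.succAbove)).det
  have hW : W ≠ 0 := (associated_det_wronskianMatrix_succAbove hsum t₀ t).ne_zero_iff.1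
    (det_wronskianMatrix_ne_zero hli)
  have hmult (r : K) : ∑ s, rootMultiplicity r (v s) ≤ rootMultiplicity r W + n.choose 2 := by
    obtain ⟨t₁, ht₁⟩ := hroot r
    have hdvd := (associated_det_wronskianMatrix_succAbove hsum t₁ t).dvd_iff_dvd_right.1
      (pow_sub_dvd_det_wronskianMatrix (v ∘ t₁.succAbove) r)
    have := (le_rootMultiplicity_iff hW).2 hdvd
    rw [Fin.sum_univ_succAbove _ t₁, rootMultiplicity_eq_zero ht₁, zero_add]
    simp only [Function.comp_apply] at this
    omega
  have hdeg (s : Fin (n + 1)) : ∑ r ∈ R, rootMultiplicity r (v s) = (v s).natDegree :=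
    sum_rootMultiplicity_eq_natDegree fun r hr =>
      Finset.mem_biUnion.2 ⟨s, Finset.mem_univ s, Multiset.mem_toFinset.2 hr⟩
  have := calc (v t).natDegree + ∑ s, (v (t.succAbove s)).natDegree
      = ∑ s, (v s).natDegree := (Fin.sum_univ_succAbove (fun s => (v s).natDegree) t).symm
    _ = ∑ r ∈ R, ∑ s, rootMultiplicity r (v s) := by rw [Finset.sum_comm]; simp only [hdeg]
    _ ≤ ∑ r ∈ R, (rootMultiplicity r W + n.choose 2) := Finset.sum_le_sum fun r _ => hmult r
    _ = ∑ r ∈ R, rootMultiplicity r W + n.choose 2 * R.card := by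
      rw [Finset.sum_add_distrib, Finset.sum_const, smul_eq_mul, mul_comm]
    _ ≤ W.natDegree + n.choose 2 * R.card := by grw [sum_rootMultiplicity_le_natDegree W R]
    _ ≤ ∑ s, (v (t.succAbove s)).natDegree + n.choose 2 * R.card := by
      grw [natDegree_det_wronskianMatrix_le]; rfl
  omega

theorem exists_not_isRoot_of_gcd_eq_one {K ι : Type*} [Field K] [DecidableEq K] {s : Finset ι}
    {u : ι → K[X]} (h : s.gcd u = 1) (r : K) : ∃ i ∈ s, ¬ (u i).IsRoot r := by
  by_contra! hroot
  have : X - C r ∣ s.gcd u := Finset.dvd_gcd fun i hi => dvd_iff_isRoot.2 (hroot i hi)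
  rw [h] at this
  exact not_isUnit_X_sub_C r (isUnit_of_dvd_one this)

theorem mul_natDegree_le_of_sum_smul_pow_eq_zero {K : Type*} [Field K] [IsAlgClosed K]
    [CharZero K] {n m : ℕ} {u : Fin (n + 1) → K[X]} {c : Fin (n + 1) → K} (hc : ∀ t, c t ≠ 0)
    (hm : m ≠ 0) (hsum : ∑ t, c t • u t ^ m = 0) (hroot : ∀ r, ∃ t, ¬ (u t).IsRoot r)
    {t₀ : Fin (n + 1)} (hli : LinearIndependent K fun s => u (t₀.succAbove s) ^ m)
    (t : Fin (n + 1)) : m * (u t).natDegree ≤ n.choose 2 * ∑ s, (u s).natDegree := by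
  classical
  have hroots (s : Fin (n + 1)) : (c s • u s ^ m).roots.toFinset = (u s).roots.toFinset := by
    rw [roots_smul_nonzero _ (hc s), roots_pow, Multiset.toFinset_nsmul _ _ hm]
  have hv := natDegree_le_choose_two_mul_card_roots_of_sum_eq_zero (v := fun s => c s • u s ^ m)
    hsum (fun r => (hroot r).imp fun s hs => by simpa [hc s, hm] using hs)
    (hli.units_smul fun s => Units.mk0 _ (hc (t₀.succAbove s))) t
  simp only [hroots, natDegree_smul _ (hc t), natDegree_pow] at hv
  refine hv.trans (Nat.mul_le_mul_left _ ?_)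
  calc _ ≤ ∑ s, (u s).roots.toFinset.card := Finset.card_biUnion_le
    _ ≤ ∑ s, (u s).natDegree := Finset.sum_le_sum fun s _ =>
        (Multiset.toFinset_card_le _).trans (card_roots' _)

theorem le_choose_two_mul_of_sum_smul_pow_eq_zero {K : Type*} [Field K] [IsAlgClosed K]
    [CharZero K] {n m : ℕ} {u : Fin (n + 1) → K[X]} {c : Fin (n + 1) → K} (hc : ∀ t, c t ≠ 0)
    (hm : m ≠ 0) (hsum : ∑ t, c t • u t ^ m = 0) (hroot : ∀ r, ∃ t, ¬ (u t).IsRoot r)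
    {t₀ : Fin (n + 1)} (hli : LinearIndependent K fun s => u (t₀.succAbove s) ^ m)
    (hdeg : ∃ t, (u t).natDegree ≠ 0) : m ≤ (n + 1) * n.choose 2 := by
  obtain ⟨t, ht⟩ := hdeg
  have hD : 0 < ∑ s, (u s).natDegree :=
    Finset.sum_pos' (fun _ _ => Nat.zero_le _) ⟨t, Finset.mem_univ t, Nat.pos_of_ne_zero ht⟩
  refine Nat.le_of_mul_le_mul_right ?_ hD
  calc m * ∑ s, (u s).natDegree = ∑ s, m * (u s).natDegree := Finset.mul_sum _ _ _
    _ ≤ ∑ _s : Fin (n + 1), n.choose 2 * ∑ s, (u s).natDegree := Finset.sum_le_sum fun s _ =>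
        mul_natDegree_le_of_sum_smul_pow_eq_zero hc hm hsum hroot hli s
    _ = (n + 1) * n.choose 2 * ∑ s, (u s).natDegree := by simp [mul_assoc]

theorem exists_coprime_of_sum_smul_pow_eq_zero {K : Type*} [Field K] {n m : ℕ}
    {w : Fin (n + 1) → K[X]} {c : Fin (n + 1) → K} (hw : ∀ t, w t ≠ 0)
    (hsum : ∑ t, c t • w t ^ m = 0) {t₀ : Fin (n + 1)}
    (hli : LinearIndependent K fun s => w (t₀.succAbove s) ^ m) :
    ∃ (G : K[X]) (u : Fin (n + 1) → K[X]), (∀ t, w t = G * u t) ∧ ∑ t, c t • u t ^ m = 0 ∧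
      (LinearIndependent K fun s => u (t₀.succAbove s) ^ m) ∧ ∀ r, ∃ t, ¬ (u t).IsRoot r := by
  classical
  obtain ⟨u, hu, hgcd⟩ := Finset.univ.extract_gcd w Finset.univ_nonempty
  set G := Finset.univ.gcd w
  replace hu (t : Fin (n + 1)) : w t = G * u t := hu t (Finset.mem_univ t)
  have hG : G ≠ 0 := fun h => hw 0 (by rw [hu, h, zero_mul])
  refine ⟨G, u, hu, ?_, ?_, fun r => ?_⟩
  · refine (mul_eq_zero.1 ?_).resolve_left (pow_ne_zero m hG)
    rw [Finset.mul_sum, ← hsum]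
    exact Finset.sum_congr rfl fun t _ => by rw [hu, mul_pow, mul_smul_comm]
  · refine LinearIndependent.of_comp (LinearMap.mulLeft K (G ^ m)) ?_
    have : (LinearMap.mulLeft K (G ^ m) ∘ fun s => u (t₀.succAbove s) ^ m) =
        fun s => w (t₀.succAbove s) ^ m := by
      ext1 s; simp [hu, mul_pow]
    exact this ▸ hli
  · obtain ⟨t, -, ht⟩ := exists_not_isRoot_of_gcd_eq_one hgcd r
    exact ⟨t, ht⟩

end Polynomial

/-- For every `k ≥ 2` there exists `M₀` such that for all `m ≥ M₀` the
equation `f₁^m + ⋯ + f_k^m = 0` has no solution in nonzero polynomials over ℂ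
with no `f i` a scalar multiple of another. -/
theorem no_nontrivial_power_sums (k : ℕ) (hk : 2 ≤ k) :
    ∃ M₀ : ℕ, ∀ m : ℕ, M₀ ≤ m →
      ¬ ∃ f : Fin k → ℂ[X], (∀ i, f i ≠ 0) ∧
        (∀ i j, i ≠ j → ∀ c : ℂ, f i ≠ c • f j) ∧
        ∑ i, f i ^ m = 0 := by
  refine ⟨k ^ 3 + 1, fun m hm ⟨f, hf0, hprop, hsum⟩ => ?_⟩
  have hm0 : m ≠ 0 := by omega
  obtain ⟨n, e, c, he, hc, hrel, hli⟩ := exists_minimal_vanishing_combination (K := ℂ)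
    (g := fun i => f i ^ m) (Fintype.not_linearIndependent_iff.2
      ⟨1, by simpa using hsum, ⟨0, by omega⟩, one_ne_zero⟩)
  obtain ⟨G, u, hu, hurel, huli, hroot⟩ :=
    exists_coprime_of_sum_smul_pow_eq_zero (fun t => hf0 (e t)) hrel (hli 0)
  by_cases hdeg : ∃ t, (u t).natDegree ≠ 0
  · have hn : n + 1 ≤ k := by simpa using Fintype.card_le_of_injective e he
    have := le_choose_two_mul_of_sum_smul_pow_eq_zero hc hm0 hurel hroot huli hdeg
    have : (n + 1) * n.choose 2 ≤ k ^ 3 := calc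
      _ ≤ k * k ^ 2 :=
        Nat.mul_le_mul hn ((Nat.choose_le_pow n 2).trans (Nat.pow_le_pow_left (by omega) 2))
      _ = k ^ 3 := by ring
    omega
  · have hn0 : n ≠ 0 := by
      rintro rfl
      simp [hm0, hc, hf0] at hrel
    simp only [not_exists, not_not] at hdeg
    choose a ha using fun t => (⟨_, eq_C_of_natDegree_eq_zero (hdeg t)⟩ : ∃ a, u t = C a)
    have ha0 : a (Fin.last n) ≠ 0 := fun h => hf0 _ (by rw [hu, ha, h, C_0, mul_zero])
    refine hprop (e 0) (e (Fin.last n)) (he.ne (Fin.ext_iff.not.2 (Ne.symm hn0)))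
      (a 0 / a (Fin.last n)) ?_
    rw [hu, hu, ha, ha, smul_eq_C_mul, mul_left_comm, ← C_mul, div_mul_cancel₀ _ ha0]
end

section
/- There exists M₀ such that for all m ≥ M₀, the equation f(x)^m + g(x)^m + h(x)^m = 0 has no solution in nonzero polynomials f, g, h ∈ ℂ[x] where no one of f, g, h is a scalar multiple of another. -/
open Polynomial

/-!
Over an algebraically closed field `-1` is an `m`-th power, so `f^m + g^m + h^m = 0` is Fermat's
equation `f^m + g^m = (ζ h)^m`. By the polynomial Fermat theorem (a consequence of Mason–Stothers)
every solution with `m ≥ 3` is a common polynomial times constants, so `f` is a scalar multiple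
of `g`.
-/

theorem Polynomial.exists_eq_smul_of_pow_add_pow_add_pow_eq_zero {k : Type*} [Field k]
    [IsAlgClosed k] {n : ℕ} (hn : 3 ≤ n) (chn : (n : k) ≠ 0) {a b c : k[X]}
    (ha : a ≠ 0) (hb : b ≠ 0) (hc : c ≠ 0) (heq : a ^ n + b ^ n + c ^ n = 0) :
    ∃ u : k, a = u • b := by
  obtain ⟨ζ, hζ⟩ := IsAlgClosed.exists_pow_nat_eq (-1 : k) (n := n) (by omega)
  have hfermat : a ^ n + b ^ n = (C ζ * c) ^ n := by
    rw [mul_pow, ← C_pow, hζ, C_neg, C_1]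
    linear_combination heq
  have hζ0 : ζ ≠ 0 := ne_zero_pow (by omega) (hζ ▸ neg_ne_zero.mpr one_ne_zero)
  obtain ⟨d, a', b', -, ⟨rfl, rfl, -⟩, ha', hb', -⟩ :=
    fermatLastTheoremWith'_polynomial hn chn a b _ ha hb
      (mul_ne_zero (C_ne_zero.mpr hζ0) hc) hfermat
  obtain ⟨r, -, hr⟩ := Polynomial.isUnit_iff.mp (ha'.mul hb'.unit⁻¹.isUnit)
  refine ⟨r, ?_⟩
  rw [smul_eq_C_mul, hr, mul_assoc, ← mul_assoc _ b', IsUnit.val_inv_mul, one_mul]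

/-- There exists `M₀` such that for all `m ≥ M₀`, the equation
`f^m + g^m + h^m = 0` has no solution in nonzero polynomials over ℂ where no
one of `f, g, h` is a scalar multiple of another. -/
theorem no_nontrivial_power_sums_three :
    ∃ M₀ : ℕ, ∀ m : ℕ, M₀ ≤ m →
      ¬ ∃ f g h : ℂ[X], f ≠ 0 ∧ g ≠ 0 ∧ h ≠ 0 ∧
        (∀ c : ℂ, f ≠ c • g) ∧ (∀ c : ℂ, f ≠ c • h) ∧ (∀ c : ℂ, g ≠ c • h) ∧
        (∀ c : ℂ, g ≠ c • f) ∧ (∀ c : ℂ, h ≠ c • f) ∧ (∀ c : ℂ, h ≠ c • g) ∧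
        f ^ m + g ^ m + h ^ m = 0 := by
  refine ⟨3, fun m hm => ?_⟩
  rintro ⟨f, g, h, hf, hg, hh, hfg, -, -, -, -, -, heq⟩
  obtain ⟨u, hu⟩ := exists_eq_smul_of_pow_add_pow_add_pow_eq_zero hm
    (Nat.cast_ne_zero.mpr (by omega)) hf hg hh heq
  exact hfg u hu
end

section
/- Let S be a finite subset of an additive abelian group with |S + S| ≤ K·|S|. Then for all natural numbers k, ℓ, |kS − ℓS| ≤ K^{k+ℓ}·|S|, where kS − ℓS denotes the set of all sums of k elements of S minus ℓ elements of S. -/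
open Finset
open scoped Pointwise

/-- The Plünnecke–Ruzsa inequality: if `S` is a finite nonempty subset of an
additive abelian group with `|S + S| ≤ K·|S|`, then `|kS − ℓS| ≤ K^(k+ℓ)·|S|`,
where `k • S` denotes the `k`-fold sumset. -/
theorem pluennecke_ruzsa {G : Type*} [AddCommGroup G] [DecidableEq G]
    (S : Finset G) (hS : S.Nonempty) (K : ℝ)
    (hK : ((S + S).card : ℝ) ≤ K * S.card) (k ℓ : ℕ) :
    ((k • S - ℓ • S).card : ℝ) ≤ K ^ (k + ℓ) * S.card := by
  have hdoubling : ((S + S).card : ℝ) / S.card ≤ K :=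
    (div_le_iff₀ (by exact_mod_cast hS.card_pos)).2 hK
  calc ((k • S - ℓ • S).card : ℝ)
      ≤ (((S + S).card : ℝ) / S.card) ^ (k + ℓ) * S.card := by
        have h := NNRat.cast_le (K := ℝ) |>.2
          (pluennecke_ruzsa_inequality_nsmul_sub_nsmul_add hS S k ℓ)
        push_cast at h
        exact h
    _ ≤ K ^ (k + ℓ) * S.card := by gcongr
end

section
/- Let S be a finite subset of positive real numbers (or a commutative cancellative monoid written multiplicatively) with |S·S| ≤ K·|S|. Then |S^m| ≤ K^m·|S| for every m ≥ 1, where S^m is the set of m-fold products of elements of S. -/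
open Finset
open scoped Pointwise

/-- A cancellative commutative monoid embeds injectively in its Grothendieck group, so the
inequality transfers from the group case, cardinalities of products being preserved. -/
theorem Finset.pluennecke_ruzsa_inequality_pow_mul_of_cancel {M : Type*} [CancelCommMonoid M]
    [DecidableEq M] {A : Finset M} (hA : A.Nonempty) (B : Finset M) (n : ℕ) :
    #(B ^ n) ≤ (#(A * B) / #A : ℚ≥0) ^ n * #A := by
  classical
  let ι := Algebra.GrothendieckGroup.of (M := M)
  have hι : Function.Injective ι := Algebra.GrothendieckGroup.of_injective
  have card_image (s : Finset M) : #(s.image ι) = #s := card_image_of_injective s hι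
  have key := pluennecke_ruzsa_inequality_pow_mul (hA.image ι) (B.image ι) n
  rwa [← image_pow, ← image_mul, card_image, card_image, card_image] at key

theorem pluennecke_ruzsa_mul_general {G : Type*} [CancelCommMonoid G] [DecidableEq G]
    (S : Finset G) (hS : S.Nonempty) (K : ℝ)
    (hK : ((S * S).card : ℝ) ≤ K * S.card) (m : ℕ) :
    ((S ^ m).card : ℝ) ≤ K ^ m * S.card := by
  have hS_pos : (0 : ℝ) < #S := by exact_mod_cast hS.card_pos
  have hratio : (#(S * S) / #S : ℝ) ≤ K := (div_le_iff₀ hS_pos).2 hK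
  have key : (#(S ^ m) : ℝ) ≤ (#(S * S) / #S : ℝ) ^ m * #S := by
    have := NNRat.cast_le (K := ℝ) |>.2 (pluennecke_ruzsa_inequality_pow_mul_of_cancel hS S m)
    push_cast at this
    exact this
  exact key.trans (by gcongr)

/-- Multiplicative Plünnecke–Ruzsa inequality: if `S` is a finite nonempty
subset of a commutative cancellative monoid with `|S·S| ≤ K·|S|`, then
`|S^m| ≤ K^m·|S|` for every `m ≥ 1`. -/
theorem pluennecke_ruzsa_mul {G : Type*} [CancelCommMonoid G] [DecidableEq G]
    (S : Finset G) (hS : S.Nonempty) (K : ℝ)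
    (hK : ((S * S).card : ℝ) ≤ K * S.card) (m : ℕ) (hm : 1 ≤ m) :
    ((S ^ m).card : ℝ) ≤ K ^ m * S.card :=
  pluennecke_ruzsa_mul_general S hS K hK m
end

section
/- Let R and S be finite nonempty subsets of a commutative cancellative monoid with |R·S| ≤ |R|^{1+ε}. Then there exist s ∈ S and r' ∈ R such that for at least |S|·|R|^{−ε} elements s' ∈ S there exists r ∈ R with r·s = r'·s'. -/
/-!
By Cauchy–Schwarz, `|R|² |S|² ≤ |R·S| · Eₘ[R, S]`, so the hypothesis gives
`Eₘ[R, S] ≥ |R|^(1-ε) |S|²`. Grouping the energy quadruples `r s = r' s'` by the pair `(r', s)`,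
right cancellation makes `r` a function of `s'`, so the fibre over `(r', s)` has exactly as many
elements as the set of `s'` in the conclusion. Since there are `|R| |S|` pairs, one fibre has at
least `|S| |R|^(-ε)` elements.
-/

open Finset
open scoped Pointwise Classical

namespace Finset

variable {α : Type*} [DecidableEq α] [Mul α]

lemma mulEnergy_eq_sum_card_filter (s t : Finset α) :
    mulEnergy s t = ∑ p ∈ s ×ˢ t, #{x ∈ s ×ˢ t | x.1 * p.2 = p.1 * x.2} := by
  rw [← card_sigma, mulEnergy]
  refine card_nbij' (fun x => ⟨(x.1.2, x.2.1), (x.1.1, x.2.2)⟩)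
    (fun y => ((y.2.1, y.1.1), (y.1.2, y.2.2))) ?_ ?_ ?_ ?_ <;>
  · intro x hx; simp_all [and_assoc]

lemma card_filter_mul_eq_card_filter_exists [IsRightCancelMul α] (s t : Finset α) (a b : α) :
    #{x ∈ s ×ˢ t | x.1 * b = a * x.2} = #{y ∈ t | ∃ x ∈ s, x * b = a * y} := by
  have hinj : Set.InjOn Prod.snd
      (({x ∈ s ×ˢ t | x.1 * b = a * x.2} : Finset (α × α)) : Set (α × α)) := by
    rintro ⟨x, y⟩ hxy ⟨x', y'⟩ hxy' rfl
    simp only [coe_filter, mem_product, Set.mem_ofPred_eq] at hxy hxy'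
    simpa using mul_right_cancel (hxy.2.trans hxy'.2.symm)
  rw [← card_image_of_injOn hinj]
  congr 1
  ext y
  simp only [mem_image, mem_filter, mem_product, Prod.exists]
  aesop

lemma rpow_mul_sq_le_mulEnergy_of_card_mul_le_rpow {s t : Finset α} (hs : s.Nonempty) {ε : ℝ}
    (h : (#(s * t) : ℝ) ≤ (#s : ℝ) ^ (1 + ε)) :
    (#s : ℝ) ^ (1 - ε) * (#t : ℝ) ^ 2 ≤ mulEnergy s t := by
  have hs₀ : (0 : ℝ) < #s := by exact_mod_cast hs.card_pos
  have hcs : (#s : ℝ) ^ 2 * (#t : ℝ) ^ 2 ≤ #(s * t) * mulEnergy s t := by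
    exact_mod_cast le_card_mul_mul_mulEnergy s t
  have hsplit : (#s : ℝ) ^ 2 = #s ^ (1 + ε) * #s ^ (1 - ε) := by
    rw [← Real.rpow_add hs₀, ← Real.rpow_natCast]; norm_num
  rw [hsplit, mul_assoc] at hcs
  exact le_of_mul_le_mul_left (hcs.trans (by gcongr)) (by positivity)

end Finset

theorem averaging_lemma_general {M : Type*} [CancelCommMonoid M] [DecidableEq M]
    (R S : Finset M) (hR : R.Nonempty) (hS : S.Nonempty)
    (ε : ℝ) (h : ((R * S).card : ℝ) ≤ (R.card : ℝ) ^ ((1 : ℝ) + ε)) :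
    ∃ s ∈ S, ∃ r' ∈ R,
      (S.card : ℝ) * (R.card : ℝ) ^ (-ε) ≤
        ((S.filter fun s' => ∃ r ∈ R, r * s = r' * s').card : ℝ) := by
  have hR₀ : (0 : ℝ) < #R := by exact_mod_cast hR.card_pos
  obtain ⟨⟨r', s⟩, hp, hle⟩ := exists_le_of_sum_le (hR.product hS) <| calc
    ∑ _ ∈ R ×ˢ S, (#S : ℝ) * #R ^ (-ε) = (#R : ℝ) ^ (1 - ε) * #S ^ 2 := by
      rw [sum_const, nsmul_eq_mul, card_product, Nat.cast_mul, sub_eq_add_neg,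
        Real.rpow_add hR₀, Real.rpow_one]
      ring
    _ ≤ mulEnergy R S := rpow_mul_sq_le_mulEnergy_of_card_mul_le_rpow hR h
    _ = ∑ p ∈ R ×ˢ S, (#{s' ∈ S | ∃ r ∈ R, r * p.2 = p.1 * s'} : ℝ) := by
      rw [mulEnergy_eq_sum_card_filter]
      push_cast
      simp only [card_filter_mul_eq_card_filter_exists]
  rw [mem_product] at hp
  exact ⟨s, hp.2, r', hp.1, hle⟩

/-- If `R, S` are finite nonempty subsets of a commutative cancellative monoid
with `|R·S| ≤ |R|^(1+ε)`, then there exist `s ∈ S` and `r' ∈ R` such that for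
at least `|S|·|R|^(−ε)` elements `s' ∈ S` there is `r ∈ R` with `r·s = r'·s'`. -/
theorem averaging_lemma {M : Type*} [CancelCommMonoid M] [DecidableEq M]
    (R S : Finset M) (hR : R.Nonempty) (hS : S.Nonempty)
    (ε : ℝ) (hε : 0 ≤ ε) (h : ((R * S).card : ℝ) ≤ (R.card : ℝ) ^ ((1 : ℝ) + ε)) :
    ∃ s ∈ S, ∃ r' ∈ R,
      (S.card : ℝ) * (R.card : ℝ) ^ (-ε) ≤
        ((S.filter fun s' => ∃ r ∈ R, r * s = r' * s').card : ℝ) :=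
  averaging_lemma_general R S hR hS ε h
end

section
/- Let t₁, t₂, t₃, u₁, u₂, u₃, v₁, v₂, v₃ be monic polynomials in ℂ[x] and M ≥ M₀ where M₀ is large enough that no non-trivial vanishing sum of at most 6 M-th powers of polynomials (no term a scalar multiple of another) exists. If the 3×3 determinant det[[t₁^M, t₂^M, t₃^M],[u₁^M, u₂^M, u₃^M],[v₁^M, v₂^M, v₃^M]] = 0, then the six products appearing in the determinant expansion must pair off: there is a pairing of the three positive terms with the three negative terms in which paired products of M-th powers are equal. -/
/-!
Expanding the determinant, its vanishing says that the three positive products of `M`-th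
powers of monic polynomials sum to the three negative ones. Grouping equal terms gives a
relation `∑ cᵥ • v = 0` among distinct monic `M`-th powers `v = mᵥ ^ M`, where `cᵥ` is the
multiplicity of `v` on the left minus that on the right. Taking an `M`-th root `γᵥ` of each
nonzero `cᵥ` turns it into a vanishing sum of the `M`-th powers of the `γᵥ • mᵥ`, no two of
which are proportional because the `mᵥ` are distinct and monic. The hypothesis on `M` forbids
this, so every `cᵥ` vanishes and both sides agree term by term.
-/

open Polynomial Finset

def NoNontrivialVanishingSumOfPowers (K : Type*) [Field K] (n M : ℕ) : Prop :=
  ∀ j : ℕ, 2 ≤ j → j ≤ n → ¬ ∃ g : Fin j → K[X], (∀ i, g i ≠ 0) ∧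
    (∀ i i', i ≠ i' → ∀ c : K, g i ≠ c • g i') ∧ ∑ i, g i ^ M = 0

theorem sum_eq_sum_card_fiber_smul {V ι : Type*} [AddCommMonoid V] [DecidableEq V] [Fintype ι]
    {S : Finset V} {a : ι → V} (ha : ∀ i, a i ∈ S) : ∑ i, a i = ∑ v ∈ S, #{i | a i = v} • v := by
  rw [← sum_fiberwise_of_maps_to (fun i _ => ha i)]
  refine sum_congr rfl fun v _ => ?_
  rw [sum_congr rfl fun i hi => (mem_filter.1 hi).2, sum_const]

theorem exists_perm_of_linearIndepOn_of_sum_eq {R V ι : Type*} [Ring R] [CharZero R]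
    [AddCommGroup V] [Module R V] [Fintype ι] {S : Finset V}
    (hS : LinearIndepOn R id (S : Set V)) {a b : ι → V} (ha : ∀ i, a i ∈ S) (hb : ∀ i, b i ∈ S)
    (h : ∑ i, a i = ∑ i, b i) : ∃ σ : Equiv.Perm ι, ∀ i, a i = b (σ i) := by
  classical
  have hfiber : ∀ v, #{i | a i = v} = #{i | b i = v} := by
    intro v
    by_cases hv : v ∈ S
    · have hcoeff := linearIndepOn_finset_iff.1 hS
        (fun v => (#{i | a i = v} : R) - #{i | b i = v}) (by
          simp only [id, sub_smul, sum_sub_distrib, Nat.cast_smul_eq_nsmul, h, sub_self,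
            ← sum_eq_sum_card_fiber_smul ha, ← sum_eq_sum_card_fiber_smul hb]) v hv
      exact_mod_cast sub_eq_zero.1 hcoeff
    · rw [filter_false_of_mem fun i _ (hi : a i = v) => hv (hi ▸ ha i),
        filter_false_of_mem fun i _ (hi : b i = v) => hv (hi ▸ hb i)]
  refine ⟨Equiv.ofFiberEquiv fun v => Fintype.equivOfCardEq ?_,
    fun i => (Equiv.ofFiberEquiv_map _ i).symm⟩
  simpa only [Fintype.card_subtype] using hfiber v

theorem Polynomial.Monic.eq_of_smul_eq_smul {K : Type*} [Field K] {p q : K[X]} (hp : p.Monic)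
    (hq : q.Monic) {a b : K} (ha : a ≠ 0) (h : a • p = b • q) : p = q := by
  have hab : a = b := by
    simpa [smul_eq_C_mul, hp.leadingCoeff, hq.leadingCoeff] using
      congrArg Polynomial.leadingCoeff h
  exact smul_right_injective _ ha (h.trans (by rw [hab]))

section MonicPowers

variable {K : Type*} [Field K] [IsAlgClosed K] {n M : ℕ}

theorem eq_zero_of_sum_smul_monic_pow_eq_zero (hM : NoNontrivialVanishingSumOfPowers K n M)
    (hM0 : 0 < M) {j : ℕ} (hj : j ≤ n) {m : Fin j → K[X]} (hm : ∀ i, (m i).Monic)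
    (hinj : Function.Injective m) {c : Fin j → K} (hc : ∀ i, c i ≠ 0)
    (hsum : ∑ i, c i • m i ^ M = 0) : j = 0 := by
  choose γ hγ using fun i => IsAlgClosed.exists_pow_nat_eq (c i) hM0
  have hγ0 : ∀ i, γ i ≠ 0 := fun i hi => hc i (by rw [← hγ i, hi, zero_pow hM0.ne'])
  rcases j with _ | _ | j
  · rfl
  · exact absurd hsum (by simpa using smul_ne_zero (hc 0) (pow_ne_zero M (hm 0).ne_zero))
  · refine (hM (j + 2) (by omega) hj ?_).elim
    refine ⟨fun i => γ i • m i, fun i => smul_ne_zero (hγ0 i) (hm i).ne_zero, ?_, ?_⟩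
    · intro i i' hii' d h
      exact hii' (hinj ((hm i).eq_of_smul_eq_smul (hm i') (hγ0 i)
        (h.trans (smul_smul d (γ i') (m i')))))
    · simpa only [_root_.smul_pow, hγ] using hsum

theorem linearIndepOn_of_forall_mem_monic_pow (hM : NoNontrivialVanishingSumOfPowers K n M)
    (hM0 : 0 < M) {S : Finset K[X]} (hS : #S ≤ n)
    (hmon : ∀ v ∈ S, ∃ m : K[X], m.Monic ∧ m ^ M = v) : LinearIndepOn K id (S : Set K[X]) := by
  classical
  refine linearIndepOn_finset_iff.2 fun c hc v hv => by_contra fun hcv => ?_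
  set T := {w ∈ S | c w ≠ 0}
  let e := T.equivFin.symm
  choose m hm hmv using fun i => hmon (e i) (mem_filter.1 (e i).2).1
  have hsumT : ∑ i, c (e i) • m i ^ M = 0 := by
    simp only [hmv]
    rw [e.sum_comp (fun w : T => c w • (w : K[X])), T.sum_coe_sort (fun w => c w • w),
      sum_filter_of_ne (p := fun w => c w ≠ 0)
        fun w _ hw hcw => hw (by rw [hcw, zero_smul])]
    exact hc
  have hT : #T = 0 := eq_zero_of_sum_smul_monic_pow_eq_zero hM hM0
    ((card_filter_le _ _).trans hS) hm
    (fun i i' h => e.injective (Subtype.ext (by rw [← hmv, ← hmv, h])))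
    (fun i => (mem_filter.1 (e i).2).2) hsumT
  exact (card_pos.2 ⟨v, mem_filter.2 ⟨hv, hcv⟩⟩).ne' hT

theorem exists_perm_of_sum_monic_pow_eq (hM : NoNontrivialVanishingSumOfPowers K n M)
    [CharZero K] (hM0 : 0 < M) {ι : Type*} [Fintype ι] (hι : 2 * Fintype.card ι ≤ n)
    {a b : ι → K[X]} (ha : ∀ i, ∃ m : K[X], m.Monic ∧ m ^ M = a i)
    (hb : ∀ i, ∃ m : K[X], m.Monic ∧ m ^ M = b i)
    (h : ∑ i, a i = ∑ i, b i) : ∃ σ : Equiv.Perm ι, ∀ i, a i = b (σ i) := by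
  classical
  have hcard : #(univ.image a ∪ univ.image b) ≤ n :=
    calc #(univ.image a ∪ univ.image b) ≤ #(univ.image a) + #(univ.image b) := card_union_le _ _
      _ ≤ Fintype.card ι + Fintype.card ι := add_le_add card_image_le card_image_le
      _ ≤ n := by omega
  refine exists_perm_of_linearIndepOn_of_sum_eq
    (linearIndepOn_of_forall_mem_monic_pow hM hM0 hcard ?_) (by simp) (by simp) h
  simp only [mem_union, mem_image, mem_univ, true_and]
  rintro v (⟨i, rfl⟩ | ⟨i, rfl⟩)
  exacts [ha i, hb i]

end MonicPowers

/-- If a 3×3 determinant of `M`-th powers of monic polynomials vanishes, and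
`M` is large enough that there is no nontrivial vanishing sum of at most 6
`M`-th powers of nonzero polynomials with no term a scalar multiple of
another, then the six products in the determinant expansion pair off: some
bijection matches each positive term with an equal negative term. -/
theorem singular_det_of_powers_pairs_off (M : ℕ)
    (hM : ∀ j : ℕ, 2 ≤ j → j ≤ 6 →
      ¬ ∃ g : Fin j → ℂ[X], (∀ i, g i ≠ 0) ∧
        (∀ i i', i ≠ i' → ∀ c : ℂ, g i ≠ c • g i') ∧
        ∑ i, g i ^ M = 0)
    (t₁ t₂ t₃ u₁ u₂ u₃ v₁ v₂ v₃ : ℂ[X])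
    (ht₁ : t₁.Monic) (ht₂ : t₂.Monic) (ht₃ : t₃.Monic)
    (hu₁ : u₁.Monic) (hu₂ : u₂.Monic) (hu₃ : u₃.Monic)
    (hv₁ : v₁.Monic) (hv₂ : v₂.Monic) (hv₃ : v₃.Monic)
    (hdet : (!![t₁ ^ M, t₂ ^ M, t₃ ^ M;
                u₁ ^ M, u₂ ^ M, u₃ ^ M;
                v₁ ^ M, v₂ ^ M, v₃ ^ M]).det = 0) :
    ∃ σ : Equiv.Perm (Fin 3),
      ∀ i : Fin 3,
        (![(t₁ * u₂ * v₃) ^ M, (t₂ * u₃ * v₁) ^ M, (t₃ * u₁ * v₂) ^ M]) i =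
        (![(t₃ * u₂ * v₁) ^ M, (t₂ * u₁ * v₃) ^ M, (t₁ * u₃ * v₂) ^ M]) (σ i) := by
  rcases Nat.eq_zero_or_pos M with rfl | hM0
  · exact ⟨1, fun i => by simp⟩
  refine exists_perm_of_sum_monic_pow_eq (n := 6) hM hM0 (by simp)
    (fun i => ?_) (fun i => ?_) ?_
  · fin_cases i <;> exact ⟨_, by apply_rules [Monic.mul], rfl⟩
  · fin_cases i <;> exact ⟨_, by apply_rules [Monic.mul], rfl⟩
  · rw [Matrix.det_fin_three] at hdet
    simp only [Fin.sum_univ_three, Matrix.of_apply, Matrix.cons_val', Matrix.cons_val_zero,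
      Matrix.cons_val_one, Matrix.cons_val_two, Matrix.head_cons, Matrix.tail_cons,
      Matrix.empty_val', Matrix.cons_val_fin_one, Matrix.head_fin_const, mul_pow] at hdet ⊢
    linear_combination hdet
end
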